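/- Let ν₁, ν₂ be measures on ℝ^d satisfying condition (U) with exponent α ∈ [α₀, 2) obtained from measures ν_j^{α₀} via ν_j^α(dx) = ((2-α)/(2-α₀))|x|^{α₀-α} ν_j^{α₀}(dx), where each ν_j^{α₀} satisfies ∫(r∧|z|)² ν_j^{α₀}(dz) ≤ C_U r^{2-α₀} for 0 < r ≤ 1. Fix 0 < λ < 1 ≤ η and define ν₁^α ♥ ν₂^α as in the paper. Then ν₁^α ♥ ν₂^α assigns no mass outside B₂, and ν₁^α ♥ ν₂^α(ℝ^d \ B₁) ≤ 8 C_U² η⁴ λ^{-4} (2-α₀)^{-2}. -/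

import Mathlib

open MeasureTheory Metric
open scoped ENNReal

/-- The kernel `g_λ^η(y,z) = (2-α)^{-1} |y+z|^α 1_{A_{|y+z|}}(y) 1_{A_{|y+z|}}(z)`,
where `A_r = B(0,ηr) \ B(0,λr)`. -/
noncomputable def heartKernel {d : ℕ} (α lam η : ℝ)
    (y z : EuclideanSpace ℝ (Fin d)) : ℝ :=
  if (lam * ‖y + z‖ ≤ ‖y‖ ∧ ‖y‖ < η * ‖y + z‖) ∧
      (lam * ‖y + z‖ ≤ ‖z‖ ∧ ‖z‖ < η * ‖y + z‖) then
    (2 - α)⁻¹ * ‖y + z‖ ^ α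
  else 0

/-- The value of the heart-convolution `ν₁ ♥ ν₂` on a set `E`:
`(ν₁ ♥ ν₂)(E) = ∬ 1_{E ∩ B₂}(η(y+z)) g_λ^η(y,z) ν₁(dy) ν₂(dz)`. -/
noncomputable def heartMeasureOf {d : ℕ} (α lam η : ℝ)
    (ν₁ ν₂ : Measure (EuclideanSpace ℝ (Fin d)))
    (E : Set (EuclideanSpace ℝ (Fin d))) : ℝ≥0∞ :=
  ∫⁻ y, ∫⁻ z,
    (E ∩ ball (0 : EuclideanSpace ℝ (Fin d)) 2).indicator
        (fun _ => (1 : ℝ≥0∞)) (η • (y + z)) *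
      ENNReal.ofReal (heartKernel α lam η y z) ∂ν₂ ∂ν₁

/-! The kernel vanishes unless `λ|y+z| ≤ |y|, |z|`, and the outer indicator forces
`1/η ≤ |y+z| < 2/η ≤ 2`. Hence the mass of `ν₁^α ♥ ν₂^α` outside `B₁` is at most
`4 (2-α)⁻¹ ν₁^α(B_{λ/η}ᶜ) ν₂^α(B_{λ/η}ᶜ)`, and each tail is controlled by condition (U) at scale
`r = λ/η`, since `|x|^{α₀-α} ≤ r^{α₀-α-2} (r ∧ |x|)²` on `{r ≤ |x|}`. -/

lemma withDensity_rpow_norm_tail_le {E : Type*} [NormedAddCommGroup E] [MeasurableSpace E]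
    [OpensMeasurableSpace E] (ν : Measure E) {α₀ α c C r : ℝ} (hc : 0 ≤ c)
    (hα₀α : α₀ ≤ α) (hr : 0 < r)
    (hU : ∫⁻ z, ENNReal.ofReal ((min r ‖z‖) ^ 2) ∂ν ≤ ENNReal.ofReal (C * r ^ (2 - α₀))) :
    (ν.withDensity fun x => ENNReal.ofReal (c * ‖x‖ ^ (α₀ - α))) {x | r ≤ ‖x‖} ≤
      ENNReal.ofReal (c * C * r ^ (-α)) := by
  have hS : MeasurableSet {x : E | r ≤ ‖x‖} :=
    measurableSet_le measurable_const measurable_norm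
  have hc' : 0 ≤ c * r ^ (α₀ - α - 2) := by positivity
  have hdensity : ∀ x ∈ {x : E | r ≤ ‖x‖},
      c * ‖x‖ ^ (α₀ - α) ≤ c * r ^ (α₀ - α - 2) * (min r ‖x‖) ^ 2 := by
    intro x (hx : r ≤ ‖x‖)
    rw [min_eq_left hx, mul_assoc, ← Real.rpow_two, ← Real.rpow_add hr, sub_add_cancel]
    exact mul_le_mul_of_nonneg_left (Real.rpow_le_rpow_of_nonpos hr hx (by linarith)) hc
  rw [withDensity_apply _ hS]
  calc ∫⁻ x in {x | r ≤ ‖x‖}, ENNReal.ofReal (c * ‖x‖ ^ (α₀ - α)) ∂ν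
      ≤ ∫⁻ x, ENNReal.ofReal (c * r ^ (α₀ - α - 2)) * ENNReal.ofReal ((min r ‖x‖) ^ 2) ∂ν := by
        refine (setLIntegral_mono (by fun_prop) fun x hx => ?_).trans
          (setLIntegral_le_lintegral _ _)
        rw [← ENNReal.ofReal_mul hc']
        exact ENNReal.ofReal_le_ofReal (hdensity x hx)
    _ ≤ ENNReal.ofReal (c * r ^ (α₀ - α - 2)) * ENNReal.ofReal (C * r ^ (2 - α₀)) := by
        rw [lintegral_const_mul' _ _ ENNReal.ofReal_ne_top]
        exact mul_le_mul_right hU _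
    _ = ENNReal.ofReal (c * C * r ^ (-α)) := by
        rw [← ENNReal.ofReal_mul hc']
        congr 1
        rw [show c * C * r ^ (-α) = c * C * r ^ (α₀ - α - 2 + (2 - α₀)) by ring_nf,
          Real.rpow_add hr]
        ring

lemma lintegral_lintegral_indicator_one_mul {X Y : Type*} [MeasurableSpace X] [MeasurableSpace Y]
    (μ : Measure X) (ν : Measure Y) {s : Set X} {t : Set Y} (hs : MeasurableSet s)
    (ht : MeasurableSet t) (c : ℝ≥0∞) :
    ∫⁻ y, ∫⁻ z, c * (s.indicator 1 y * t.indicator 1 z) ∂ν ∂μ = c * μ s * ν t := by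
  have inner : ∀ y,
      ∫⁻ z, c * (s.indicator 1 y * t.indicator 1 z) ∂ν = c * s.indicator 1 y * ν t := by
    intro y
    simp_rw [← mul_assoc]
    rw [lintegral_const_mul _ (measurable_one.indicator ht), lintegral_indicator_one ht]
  simp_rw [inner]
  rw [lintegral_mul_const _ ((measurable_one.indicator hs).const_mul c),
    lintegral_const_mul _ (measurable_one.indicator hs), lintegral_indicator_one hs]

section Heart

variable {d : ℕ} {α lam η : ℝ}

lemma heartKernel_le (hα₀ : 0 ≤ α) (hα₂ : α ≤ 2) {y z : EuclideanSpace ℝ (Fin d)}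
    (h : ‖y + z‖ ≤ 2) : heartKernel α lam η y z ≤ 4 * (2 - α)⁻¹ := by
  have hinv : 0 ≤ (2 - α)⁻¹ := inv_nonneg.mpr (by linarith)
  unfold heartKernel
  split_ifs
  · calc (2 - α)⁻¹ * ‖y + z‖ ^ α ≤ (2 - α)⁻¹ * (2 : ℝ) ^ (2 : ℝ) := by
          gcongr
          calc ‖y + z‖ ^ α ≤ (2 : ℝ) ^ α := Real.rpow_le_rpow (norm_nonneg _) h hα₀
            _ ≤ (2 : ℝ) ^ (2 : ℝ) := Real.rpow_le_rpow_of_exponent_le one_le_two hα₂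
      _ = 4 * (2 - α)⁻¹ := by norm_num; ring
  · positivity

lemma heartMeasureOf_compl_ball_two (ν₁ ν₂ : Measure (EuclideanSpace ℝ (Fin d))) :
    heartMeasureOf α lam η ν₁ ν₂ (ball 0 2)ᶜ = 0 := by
  simp [heartMeasureOf]

lemma heartIntegrand_compl_ball_one_le (hα₀ : 0 ≤ α) (hα₂ : α ≤ 2) (hlam : 0 ≤ lam)
    (hη : 1 ≤ η) (y z : EuclideanSpace ℝ (Fin d)) :
    ((ball 0 1)ᶜ ∩ ball 0 2).indicator (fun _ => (1 : ℝ≥0∞)) (η • (y + z)) *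
        ENNReal.ofReal (heartKernel α lam η y z) ≤
      ENNReal.ofReal (4 * (2 - α)⁻¹) *
        ({x | lam / η ≤ ‖x‖}.indicator 1 y * {x | lam / η ≤ ‖x‖}.indicator 1 z) := by
  have hη₀ : 0 < η := zero_lt_one.trans_le hη
  by_cases hmem : η • (y + z) ∈ (ball 0 1)ᶜ ∩ ball 0 2
  swap
  · rw [Set.indicator_of_notMem hmem, zero_mul]
    exact zero_le
  rw [Set.indicator_of_mem hmem, one_mul]
  simp only [Set.mem_inter_iff, Set.mem_compl_iff, mem_ball_zero_iff, not_lt, norm_smul,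
    Real.norm_of_nonneg hη₀.le] at hmem
  have hsum_ge : lam / η ≤ lam * ‖y + z‖ := by
    rw [div_eq_mul_one_div]
    exact mul_le_mul_of_nonneg_left ((div_le_iff₀' hη₀).mpr hmem.1) hlam
  have hsum_le : ‖y + z‖ ≤ 2 := by nlinarith [norm_nonneg (y + z)]
  by_cases hA : (lam * ‖y + z‖ ≤ ‖y‖ ∧ ‖y‖ < η * ‖y + z‖) ∧
      (lam * ‖y + z‖ ≤ ‖z‖ ∧ ‖z‖ < η * ‖y + z‖)
  · have hy : y ∈ {x | lam / η ≤ ‖x‖} := hsum_ge.trans hA.1.1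
    have hz : z ∈ {x | lam / η ≤ ‖x‖} := hsum_ge.trans hA.2.1
    rw [Set.indicator_of_mem hy, Set.indicator_of_mem hz]
    simpa using ENNReal.ofReal_le_ofReal (heartKernel_le hα₀ hα₂ hsum_le)
  · simp [heartKernel, hA]

lemma heartMeasureOf_compl_ball_one_le (hα₀ : 0 ≤ α) (hα₂ : α ≤ 2) (hlam : 0 ≤ lam)
    (hη : 1 ≤ η) (ν₁ ν₂ : Measure (EuclideanSpace ℝ (Fin d))) :
    heartMeasureOf α lam η ν₁ ν₂ (ball 0 1)ᶜ ≤
      ENNReal.ofReal (4 * (2 - α)⁻¹) * ν₁ {x | lam / η ≤ ‖x‖} * ν₂ {x | lam / η ≤ ‖x‖} := by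
  have hS : MeasurableSet {x : EuclideanSpace ℝ (Fin d) | lam / η ≤ ‖x‖} :=
    measurableSet_le measurable_const measurable_norm
  rw [← lintegral_lintegral_indicator_one_mul ν₁ ν₂ hS hS]
  exact lintegral_mono fun y => lintegral_mono fun z =>
    heartIntegrand_compl_ball_one_le hα₀ hα₂ hlam hη y z

end Heart

lemma heart_tail_constant_le {α₀ α C lam η : ℝ} (hα₀ : α₀ < 2) (hα0 : 0 ≤ α) (hα : α < 2)
    (hlam : 0 < lam) (hlamη : lam ≤ η) :
    4 * (2 - α)⁻¹ * ((2 - α) / (2 - α₀) * C * (lam / η) ^ (-α)) ^ 2 ≤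
      8 * C ^ 2 * η ^ 4 / (lam ^ 4 * (2 - α₀) ^ 2) := by
  have hr : 0 < lam / η := div_pos hlam (hlam.trans_le hlamη)
  have hρ : (lam / η) ^ (-α) ≤ (η / lam) ^ 2 := by
    calc (lam / η) ^ (-α) ≤ (lam / η) ^ (-2 : ℝ) :=
          Real.rpow_le_rpow_of_exponent_ge hr (div_le_one_of_le₀ hlamη (hlam.le.trans hlamη))
            (by linarith)
      _ = (η / lam) ^ 2 := by rw [Real.rpow_neg hr.le, Real.rpow_two, ← inv_pow, inv_div]
  have hρ0 : 0 ≤ (lam / η) ^ (-α) := Real.rpow_nonneg hr.le _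
  calc 4 * (2 - α)⁻¹ * ((2 - α) / (2 - α₀) * C * (lam / η) ^ (-α)) ^ 2
      = 4 * (2 - α) * C ^ 2 * ((lam / η) ^ (-α)) ^ 2 / (2 - α₀) ^ 2 := by
        field_simp [(by linarith : (2 - α) ≠ 0)]
    _ ≤ 8 * C ^ 2 * ((η / lam) ^ 2) ^ 2 / (2 - α₀) ^ 2 := by
        gcongr
        nlinarith [sq_nonneg C]
    _ = 8 * C ^ 2 * η ^ 4 / (lam ^ 4 * (2 - α₀) ^ 2) := by
        field_simp

/-- Tail estimate for the heart-convolution of the rescaled measures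
`ν_j^α = ((2-α)/(2-α₀))|x|^{α₀-α} ν_j^{α₀}`: it has no mass outside `B₂`, and
`(ν₁^α ♥ ν₂^α)(ℝ^d \ B₁) ≤ 8 C_U² η⁴ λ^{-4} (2-α₀)^{-2}`. -/
theorem stmt_19 {d : ℕ} (ν₁ ν₂ : Measure (EuclideanSpace ℝ (Fin d)))
    (α₀ α C_U lam η : ℝ) (hα₀ : α₀ ∈ Set.Ioo (0 : ℝ) 2) (hα₀α : α₀ ≤ α) (hα : α < 2)
    (hC : 0 < C_U) (hlam : 0 < lam) (hlam1 : lam < 1) (hη : 1 ≤ η)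
    (hU₁ : ∀ r : ℝ, 0 < r → r ≤ 1 →
      ∫⁻ z, ENNReal.ofReal ((min r ‖z‖) ^ 2) ∂ν₁ ≤ ENNReal.ofReal (C_U * r ^ (2 - α₀)))
    (hU₂ : ∀ r : ℝ, 0 < r → r ≤ 1 →
      ∫⁻ z, ENNReal.ofReal ((min r ‖z‖) ^ 2) ∂ν₂ ≤ ENNReal.ofReal (C_U * r ^ (2 - α₀))) :
    heartMeasureOf α lam η
        (ν₁.withDensity fun x => ENNReal.ofReal ((2 - α) / (2 - α₀) * ‖x‖ ^ (α₀ - α)))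
        (ν₂.withDensity fun x => ENNReal.ofReal ((2 - α) / (2 - α₀) * ‖x‖ ^ (α₀ - α)))
        (ball (0 : EuclideanSpace ℝ (Fin d)) 2)ᶜ = 0 ∧
      heartMeasureOf α lam η
        (ν₁.withDensity fun x => ENNReal.ofReal ((2 - α) / (2 - α₀) * ‖x‖ ^ (α₀ - α)))
        (ν₂.withDensity fun x => ENNReal.ofReal ((2 - α) / (2 - α₀) * ‖x‖ ^ (α₀ - α)))
        (ball (0 : EuclideanSpace ℝ (Fin d)) 1)ᶜ ≤
      ENNReal.ofReal (8 * C_U ^ 2 * η ^ 4 / (lam ^ 4 * (2 - α₀) ^ 2)) := by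
  refine ⟨heartMeasureOf_compl_ball_two _ _, ?_⟩
  have hα0 : 0 ≤ α := hα₀.1.le.trans hα₀α
  have hc : 0 ≤ (2 - α) / (2 - α₀) := div_nonneg (by linarith) (by linarith [hα₀.2])
  have hr : 0 < lam / η := div_pos hlam (by linarith)
  have hr1 : lam / η ≤ 1 := div_le_one_of_le₀ (by linarith) (by linarith)
  calc _ ≤ ENNReal.ofReal (4 * (2 - α)⁻¹) *
          ENNReal.ofReal ((2 - α) / (2 - α₀) * C_U * (lam / η) ^ (-α)) *
          ENNReal.ofReal ((2 - α) / (2 - α₀) * C_U * (lam / η) ^ (-α)) := by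
        refine (heartMeasureOf_compl_ball_one_le hα0 hα.le hlam.le hη _ _).trans ?_
        gcongr
        exacts [withDensity_rpow_norm_tail_le ν₁ hc hα₀α hr (hU₁ _ hr hr1),
          withDensity_rpow_norm_tail_le ν₂ hc hα₀α hr (hU₂ _ hr hr1)]
    _ ≤ _ := by
        rw [← ENNReal.ofReal_mul (by positivity), ← ENNReal.ofReal_mul (by positivity), mul_assoc,
          ← sq]
        exact ENNReal.ofReal_le_ofReal
          (heart_tail_constant_le hα₀.2 hα0 hα hlam (by linarith))
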